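/- Let G be a finite group, a ∈ G \ Z(G), and suppose nacent(G) = {G, C(a)}. Then C(a) is a CA-group, i.e., the centralizer in C(a) of every non-central element of C(a) is abelian. -/

import Mathlib

open Subgroup

/-- `Cent(G)`: the set of element centralizers of `G`. -/
def elemCentralizers (G : Type*) [Group G] : Set (Subgroup G) :=
  {H | ∃ x : G, H = Subgroup.centralizer {x}}

/-- `nacent(G)`: the set of non-abelian element centralizers of `G`. -/
def nacent (G : Type*) [Group G] : Set (Subgroup G) :=
  {H | H ∈ elemCentralizers G ∧ ¬ IsMulCommutative ↥H}

/-- A group is a CA-group if the centralizer of every non-central element is abelian. -/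
def IsCAGroup (H : Type*) [Group H] : Prop :=
  ∀ h : H, h ∉ Subgroup.center H → IsMulCommutative ↥(Subgroup.centralizer {h} : Subgroup H)

/-- The Hughes subgroup `H_p(K)`, generated by the elements of order `≠ p`. -/
def hughesSubgroup (p : ℕ) (K : Type*) [Group K] : Subgroup K :=
  Subgroup.closure {x : K | orderOf x ≠ p}

/-- The conjugate `g H g⁻¹` of a subgroup. -/
def conjSubgroup {F : Type*} [Group F] (g : F) (H : Subgroup F) : Subgroup F :=
  H.map (MulAut.conj g).toMonoidHom

/-- `F` is a Frobenius group with kernel `N` and complement `H`. -/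
def IsFrobeniusWithKernel {F : Type*} [Group F] (N H : Subgroup F) : Prop :=
  N.Normal ∧ N ⊓ H = ⊥ ∧ N ⊔ H = ⊤ ∧ N ≠ ⊥ ∧ H ≠ ⊥ ∧
    ∀ g : F, g ∉ H → H ⊓ conjSubgroup g H = ⊥

/-- `F` is a Frobenius group with complement `H`. -/
def IsFrobeniusWithComplement {F : Type*} [Group F] (H : Subgroup F) : Prop :=
  H ≠ ⊥ ∧ H ≠ ⊤ ∧ ∀ g : F, g ∉ H → H ⊓ conjSubgroup g H = ⊥

/- For `h ∈ C(a)`, the centralizer of `h` in `C(a)` is `C(h) ∩ C(a)`, abelian when `C(h)` is.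
Otherwise `C(h)` is a non-abelian centralizer, hence `G` or `C(a)`; either way it contains `C(a)`,
so `h` is central in `C(a)`. -/

namespace Subgroup

variable {G : Type*} [Group G] {K : Subgroup G}

theorem centralizer_singleton_eq_subgroupOf (h : K) :
    centralizer {h} = (centralizer {(h : G)}).subgroupOf K := by
  ext x
  simp only [mem_centralizer_singleton_iff, mem_subgroupOf, Subtype.ext_iff, coe_mul]

theorem isMulCommutative_centralizer_of_ambient (h : K)
    [IsMulCommutative (centralizer {(h : G)})] : IsMulCommutative (centralizer {h}) := by
  rw [centralizer_singleton_eq_subgroupOf]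
  infer_instance

theorem mem_center_of_le_centralizer {h : K} (hK : K ≤ centralizer {(h : G)}) :
    h ∈ center K :=
  mem_center_iff.mpr fun g ↦ Subtype.ext (mem_centralizer_singleton_iff.mp (hK g.2))

end Subgroup

theorem stmt_6_general {G : Type*} [Group G] (a : G)
    (hna : nacent G = {⊤, Subgroup.centralizer {a}}) :
    IsCAGroup ↥(Subgroup.centralizer ({a} : Set G)) := by
  intro h hh
  by_cases hc : IsMulCommutative (centralizer {(h : G)})
  · exact isMulCommutative_centralizer_of_ambient h
  · have hmem : centralizer {(h : G)} ∈ nacent G := ⟨⟨h, rfl⟩, hc⟩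
    rw [hna] at hmem
    refine absurd (mem_center_of_le_centralizer ?_) hh
    rcases hmem with htop | hCa
    · exact htop ▸ le_top
    · exact hCa.ge

theorem stmt_6 {G : Type*} [Group G] [Finite G] (a : G)
    (ha : a ∉ Subgroup.center G)
    (hna : nacent G = {⊤, Subgroup.centralizer {a}})
    (hpr : Subgroup.centralizer {a} ≠ (⊤ : Subgroup G)) :
    IsCAGroup ↥(Subgroup.centralizer ({a} : Set G)) :=
  stmt_6_general a hna
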